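/- (Energy bound for the POD-ROM discretization error.) Let V be a real inner product space with inner product (·,·) and norm ‖·‖, let B : V × V → ℝ be a symmetric bilinear form satisfying the Poincaré-type inequality C_p ‖v‖² ≤ B(v,v) for all v ∈ V and some constant C_p > 0, let V_r ⊆ V be a subspace, let c > 0, D ≥ 0, G ≥ 0 with D + G > 0, Δt > 0, N ≥ 3. Suppose φ^2,…,φ^N ∈ V_r and η^1,…,η^N ∈ V satisfy the error equation: for all n = 2,…,N−1 and all v ∈ V_r, (∂∂φ^n, v) + c² B(φ̂^n, v) + D (∂φ̄^n, v) + G B(∂φ̄^n, v) = (∂∂η^n, v) + D (∂η̄^n, v) (the B-terms of η are absent because η is the Ritz-projection error, so B(η-terms, v) = 0 for v ∈ V_r). Define E(φ^n) = (1/2)‖∂⁻φ^n‖² + (1/2)c² B(φ̄^n, φ̄^n) for n = 3,…,N (with E(φ^2) given using φ^1 := the appropriate initial value so that ∂⁻φ^2 and φ̄^2 are defined, i.e., take φ^1 ∈ V_r as well). Then max_{2≤j≤N} E(φ^j) ≤ E(φ^2) + (1/(D + 2C_p G)) Σ_{n=2}^{N−1} Δt ‖∂∂η^n‖² + D Σ_{n=2}^{N−1}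 Δt ‖∂η̄^n‖². -/

import Mathlib

/-!
Testing the error equation at step `n` with the centered difference `w = ∂φ̄ⁿ` turns its first two
terms into the energy increment `(E(φⁿ⁺¹) - E(φⁿ)) / Δt` (a discrete product rule: `∂φ̄ⁿ` is both the
average of `∂⁻φⁿ⁺¹, ∂⁻φⁿ` and the difference quotient of `φ̄ⁿ⁺¹, φ̄ⁿ`). The damping terms contribute
`D ‖w‖² + G B(w, w) ≥ (D + C_p G) ‖w‖²`, which absorbs the Young bounds of the two `η` terms. Summing
the one-step inequalities gives the claim.
-/

open Finset RealInnerProductSpace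

/-- forward difference quotient -/
noncomputable def fdiff {Z : Type*} [AddCommGroup Z] [Module ℝ Z]
    (dt : ℝ) (z : ℕ → Z) (j : ℕ) : Z := dt⁻¹ • (z (j + 1) - z j)

/-- backward difference quotient -/
noncomputable def bdiff {Z : Type*} [AddCommGroup Z] [Module ℝ Z]
    (dt : ℝ) (z : ℕ → Z) (j : ℕ) : Z := dt⁻¹ • (z j - z (j - 1))

/-- second difference quotient -/
noncomputable def ddq {Z : Type*} [AddCommGroup Z] [Module ℝ Z]
    (dt : ℝ) (z : ℕ → Z) (j : ℕ) : Z :=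
  (dt ^ 2)⁻¹ • (z (j + 1) - (2 : ℝ) • z j + z (j - 1))

/-- backward average -/
noncomputable def bavg {Z : Type*} [AddCommGroup Z] [Module ℝ Z]
    (z : ℕ → Z) (j : ℕ) : Z := (2 : ℝ)⁻¹ • (z j + z (j - 1))

/-- centered average -/
noncomputable def cavg {Z : Type*} [AddCommGroup Z] [Module ℝ Z]
    (z : ℕ → Z) (j : ℕ) : Z := (4 : ℝ)⁻¹ • (z (j + 1) + (2 : ℝ) • z j + z (j - 1))

/-- centered difference -/
noncomputable def cdiff {Z : Type*} [AddCommGroup Z] [Module ℝ Z]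
    (dt : ℝ) (z : ℕ → Z) (j : ℕ) : Z := (2 * dt)⁻¹ • (z (j + 1) - z (j - 1))

section DifferenceQuotients

variable {Z : Type*} [AddCommGroup Z] [Module ℝ Z] (dt : ℝ) (z : ℕ → Z) (n : ℕ)

lemma ddq_eq_bdiff_bdiff : ddq dt z n = bdiff dt (bdiff dt z) (n + 1) := by
  simp only [ddq, bdiff, Nat.add_sub_cancel]
  match_scalars <;> ring

lemma cdiff_eq_bavg_bdiff : cdiff dt z n = bavg (bdiff dt z) (n + 1) := by
  simp only [cdiff, bavg, bdiff, Nat.add_sub_cancel]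
  match_scalars <;> ring

lemma cdiff_eq_bdiff_bavg : cdiff dt z n = bdiff dt (bavg z) (n + 1) := by
  simp only [cdiff, bavg, bdiff, Nat.add_sub_cancel]
  match_scalars <;> ring

lemma cavg_eq_bavg_bavg : cavg z n = bavg (bavg z) (n + 1) := by
  simp only [cavg, bavg, Nat.add_sub_cancel]
  match_scalars <;> ring

lemma bilin_bavg_bdiff (Q : Z →ₗ[ℝ] Z →ₗ[ℝ] ℝ) (hQ : ∀ x y, Q x y = Q y x) :
    Q (bavg z n) (bdiff dt z n) = (2 * dt)⁻¹ * (Q (z n) (z n) - Q (z (n - 1)) (z (n - 1))) := by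
  simp only [bavg, bdiff, map_smul, map_add, map_sub, LinearMap.smul_apply, LinearMap.add_apply,
    smul_eq_mul, hQ (z (n - 1)) (z n), mul_inv]
  ring

end DifferenceQuotients

section Energy

variable {V : Type*} [NormedAddCommGroup V] [InnerProductSpace ℝ V]

noncomputable def waveEnergy (B : V →ₗ[ℝ] V →ₗ[ℝ] ℝ) (c dt : ℝ) (φ : ℕ → V) (n : ℕ) : ℝ :=
  (1 / 2) * ‖bdiff dt φ n‖ ^ 2 + (1 / 2) * c ^ 2 * B (bavg φ n) (bavg φ n)

lemma waveEnergy_succ_sub (B : V →ₗ[ℝ] V →ₗ[ℝ] ℝ) (hB : ∀ x y, B x y = B y x) (c : ℝ)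
    {dt : ℝ} (hdt : dt ≠ 0) (φ : ℕ → V) (n : ℕ) :
    waveEnergy B c dt φ (n + 1) - waveEnergy B c dt φ n
      = dt * (⟪ddq dt φ n, cdiff dt φ n⟫ + c ^ 2 * B (cavg φ n) (cdiff dt φ n)) := by
  have hkin : ⟪ddq dt φ n, cdiff dt φ n⟫
      = (2 * dt)⁻¹ * (‖bdiff dt φ (n + 1)‖ ^ 2 - ‖bdiff dt φ n‖ ^ 2) := by
    rw [ddq_eq_bdiff_bdiff, cdiff_eq_bavg_bdiff, real_inner_comm, ← innerₗ_apply_apply,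
      bilin_bavg_bdiff _ _ _ _ fun _ _ ↦ real_inner_comm _ _]
    simp only [innerₗ_apply_apply, real_inner_self_eq_norm_sq, Nat.add_sub_cancel]
  have hpot : B (cavg φ n) (cdiff dt φ n)
      = (2 * dt)⁻¹ * (B (bavg φ (n + 1)) (bavg φ (n + 1)) - B (bavg φ n) (bavg φ n)) := by
    rw [cavg_eq_bavg_bavg, cdiff_eq_bdiff_bavg, bilin_bavg_bdiff _ _ _ _ hB, Nat.add_sub_cancel]
  rw [hkin, hpot, waveEnergy, waveEnergy]
  field_simp
  ring

end Energy

/-- Young's inequality with weight `D + 2 C_p G`. -/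
lemma inner_add_damping_le {V : Type*} [NormedAddCommGroup V] [InnerProductSpace ℝ V]
    {Cp D G b : ℝ} (hD : 0 ≤ D) (hG : 0 ≤ G) (hs : 0 < D + 2 * Cp * G) (x y w : V)
    (hb : Cp * ‖w‖ ^ 2 ≤ b) :
    ⟪x, w⟫ + D * ⟪y, w⟫ - D * ‖w‖ ^ 2 - G * b
      ≤ (D + 2 * Cp * G)⁻¹ * ‖x‖ ^ 2 + D * ‖y‖ ^ 2 := by
  have hxw : 2 * ⟪x, w⟫ ≤ (D + 2 * Cp * G)⁻¹ * ‖x‖ ^ 2 + (D + 2 * Cp * G) * ‖w‖ ^ 2 := by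
    have hsq : 0 ≤ (D + 2 * Cp * G) * ((D + 2 * Cp * G)⁻¹ * ‖x‖ - ‖w‖) ^ 2 := by positivity
    have hexp : (D + 2 * Cp * G) * ((D + 2 * Cp * G)⁻¹ * ‖x‖ - ‖w‖) ^ 2
        = (D + 2 * Cp * G)⁻¹ * ‖x‖ ^ 2 - 2 * (‖x‖ * ‖w‖) + (D + 2 * Cp * G) * ‖w‖ ^ 2 := by
      field_simp
      ring
    linarith [real_inner_le_norm x w]
  have hyw : 2 * ⟪y, w⟫ ≤ ‖y‖ ^ 2 + ‖w‖ ^ 2 := by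
    nlinarith [real_inner_le_norm y w, sq_nonneg (‖y‖ - ‖w‖)]
  have hx_nonneg : 0 ≤ (D + 2 * Cp * G)⁻¹ * ‖x‖ ^ 2 := by positivity
  linarith [mul_le_mul_of_nonneg_left hyw hD, mul_le_mul_of_nonneg_left hb hG,
    mul_nonneg hD (sq_nonneg ‖y‖)]

lemma waveEnergy_succ_le {V : Type*} [NormedAddCommGroup V] [InnerProductSpace ℝ V]
    (B : V →ₗ[ℝ] V →ₗ[ℝ] ℝ) (hB : ∀ x y, B x y = B y x) {Cp : ℝ}
    (hPoincare : ∀ v : V, Cp * ‖v‖ ^ 2 ≤ B v v) {Vr : Submodule ℝ V} {c D G dt : ℝ}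
    (hD : 0 ≤ D) (hG : 0 ≤ G) (hs : 0 < D + 2 * Cp * G) (hdt : 0 < dt) {φ η : ℕ → V} {n : ℕ}
    (hφ_succ : φ (n + 1) ∈ Vr) (hφ_pred : φ (n - 1) ∈ Vr)
    (herr : ∀ v ∈ Vr,
      ⟪ddq dt φ n, v⟫ + c ^ 2 * B (cavg φ n) v + D * ⟪cdiff dt φ n, v⟫
        + G * B (cdiff dt φ n) v
      = ⟪ddq dt η n, v⟫ + D * ⟪cdiff dt η n, v⟫) :
    waveEnergy B c dt φ (n + 1) ≤ waveEnergy B c dt φ n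
      + dt * ((D + 2 * Cp * G)⁻¹ * ‖ddq dt η n‖ ^ 2 + D * ‖cdiff dt η n‖ ^ 2) := by
  have hw : cdiff dt φ n ∈ Vr := Vr.smul_mem _ (Vr.sub_mem hφ_succ hφ_pred)
  have htested := herr _ hw
  rw [real_inner_self_eq_norm_sq] at htested
  have hyoung := inner_add_damping_le hD hG hs (ddq dt η n) (cdiff dt η n) (cdiff dt φ n)
    (hPoincare (cdiff dt φ n))
  have hincr : ⟪ddq dt φ n, cdiff dt φ n⟫ + c ^ 2 * B (cavg φ n) (cdiff dt φ n)
      ≤ (D + 2 * Cp * G)⁻¹ * ‖ddq dt η n‖ ^ 2 + D * ‖cdiff dt η n‖ ^ 2 := by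
    linarith
  linarith [waveEnergy_succ_sub B hB c hdt.ne' φ n, mul_le_mul_of_nonneg_left hincr hdt.le]

lemma le_add_sum_Ico_of_succ_le {E f : ℕ → ℝ} {m k : ℕ} (hmk : m ≤ k)
    (h : ∀ n ∈ Ico m k, E (n + 1) ≤ E n + f n) : E k ≤ E m + ∑ n ∈ Ico m k, f n := by
  have htele := Finset.sum_Ico_sub E hmk
  have hsum := Finset.sum_le_sum fun n hn ↦ sub_le_iff_le_add'.2 (h n hn)
  linarith

theorem stmt_19_general
    {V : Type*} [NormedAddCommGroup V] [InnerProductSpace ℝ V]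
    (B : V →ₗ[ℝ] V →ₗ[ℝ] ℝ) (hBsymm : ∀ x y, B x y = B y x)
    (Cp : ℝ) (hCp : 0 < Cp) (hPoincare : ∀ v : V, Cp * ‖v‖ ^ 2 ≤ B v v)
    (Vr : Submodule ℝ V)
    (c D G dt : ℝ) (hD : 0 ≤ D) (hG : 0 ≤ G) (hDG : 0 < D + G)
    (hdt : 0 < dt) (N : ℕ)
    (φ η : ℕ → V) (hφVr : ∀ n ∈ Finset.Icc 1 N, φ n ∈ Vr)
    (herr : ∀ n ∈ Finset.Icc 2 (N - 1), ∀ v ∈ Vr,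
      ⟪ddq dt φ n, v⟫ + c ^ 2 * B (cavg φ n) v + D * ⟪cdiff dt φ n, v⟫
        + G * B (cdiff dt φ n) v
      = ⟪ddq dt η n, v⟫ + D * ⟪cdiff dt η n, v⟫)
    (E : ℕ → ℝ)
    (hE : ∀ n ∈ Finset.Icc 2 N,
      E n = (1 / 2) * ‖bdiff dt φ n‖ ^ 2
        + (1 / 2) * c ^ 2 * B (bavg φ n) (bavg φ n)) :
    ∀ j ∈ Finset.Icc 2 N,
      E j ≤ E 2
        + (D + 2 * Cp * G)⁻¹ * ∑ n ∈ Finset.Icc 2 (N - 1), dt * ‖ddq dt η n‖ ^ 2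
        + D * ∑ n ∈ Finset.Icc 2 (N - 1), dt * ‖cdiff dt η n‖ ^ 2 := by
  intro j hj
  obtain ⟨h2j, hjN⟩ := mem_Icc.1 hj
  have hs : 0 < D + 2 * Cp * G := by
    rcases hG.eq_or_lt with rfl | hG_pos
    · simpa using hDG
    · linarith [mul_pos hCp hG_pos]
  set f : ℕ → ℝ := fun n ↦
    dt * ((D + 2 * Cp * G)⁻¹ * ‖ddq dt η n‖ ^ 2 + D * ‖cdiff dt η n‖ ^ 2)
  have hstep : ∀ n ∈ Ico 2 j, E (n + 1) ≤ E n + f n := by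
    intro n hn
    obtain ⟨h2n, hnj⟩ := mem_Ico.1 hn
    rw [hE n (mem_Icc.2 ⟨h2n, by omega⟩), hE (n + 1) (mem_Icc.2 ⟨by omega, by omega⟩)]
    exact waveEnergy_succ_le B hBsymm hPoincare hD hG hs hdt
      (hφVr _ (mem_Icc.2 ⟨by omega, by omega⟩)) (hφVr _ (mem_Icc.2 ⟨by omega, by omega⟩))
      (herr n (mem_Icc.2 ⟨h2n, by omega⟩))
  calc E j ≤ E 2 + ∑ n ∈ Ico 2 j, f n := le_add_sum_Ico_of_succ_le h2j hstep
    _ ≤ E 2 + ∑ n ∈ Icc 2 (N - 1), f n := by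
      gcongr
      intro n hn
      rw [mem_Ico] at hn
      exact mem_Icc.2 ⟨hn.1, by omega⟩
    _ = _ := by
      rw [add_assoc, mul_sum, mul_sum, ← sum_add_distrib]
      exact congrArg _ (sum_congr rfl fun n _ ↦ by ring)

theorem stmt_19
    {V : Type*} [NormedAddCommGroup V] [InnerProductSpace ℝ V]
    (B : V →ₗ[ℝ] V →ₗ[ℝ] ℝ) (hBsymm : ∀ x y, B x y = B y x)
    (Cp : ℝ) (hCp : 0 < Cp) (hPoincare : ∀ v : V, Cp * ‖v‖ ^ 2 ≤ B v v)
    (Vr : Submodule ℝ V)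
    (c D G dt : ℝ) (hc : 0 < c) (hD : 0 ≤ D) (hG : 0 ≤ G) (hDG : 0 < D + G)
    (hdt : 0 < dt) (N : ℕ) (hN : 3 ≤ N)
    (φ η : ℕ → V) (hφVr : ∀ n ∈ Finset.Icc 1 N, φ n ∈ Vr)
    (herr : ∀ n ∈ Finset.Icc 2 (N - 1), ∀ v ∈ Vr,
      ⟪ddq dt φ n, v⟫ + c ^ 2 * B (cavg φ n) v + D * ⟪cdiff dt φ n, v⟫
        + G * B (cdiff dt φ n) v
      = ⟪ddq dt η n, v⟫ + D * ⟪cdiff dt η n, v⟫)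
    (E : ℕ → ℝ)
    (hE : ∀ n ∈ Finset.Icc 2 N,
      E n = (1 / 2) * ‖bdiff dt φ n‖ ^ 2
        + (1 / 2) * c ^ 2 * B (bavg φ n) (bavg φ n)) :
    ∀ j ∈ Finset.Icc 2 N,
      E j ≤ E 2
        + (D + 2 * Cp * G)⁻¹ * ∑ n ∈ Finset.Icc 2 (N - 1), dt * ‖ddq dt η n‖ ^ 2
        + D * ∑ n ∈ Finset.Icc 2 (N - 1), dt * ‖cdiff dt η n‖ ^ 2 :=
  stmt_19_general B hBsymm Cp hCp hPoincare Vr c D G dt hD hG hDG hdt N φ η hφVr herr E hE
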